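/- arXiv:2503.10514 — 2 statements merged into one kernel-verified Lean document; each statement's English description precedes it below -/
import Mathlib

section
/- Let b : ω → ω satisfy b(n) ≥ 2 for all n, and let M denote the meager ideal on a perfect Polish space. Then add(M) ≤ 𝔟_b^eq. -/
open Cardinal Set Filter

/-- An interval partition of `ω` into consecutive finite non-empty intervals,
encoded by the strictly increasing sequence of endpoints starting at `0`:
the `n`-th interval is `[r n, r (n+1))`. -/
def IsIntervalPartition (r : ℕ → ℕ) : Prop := r 0 = 0 ∧ StrictMono r

/-- `f ⊏• (I,h)`: for all but finitely many `n` there is `k` in the `n`-th interval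
`[r n, r (n+1))` of the partition with `f k = h k`. -/
def SqBullet {b : ℕ → ℕ} (f : ∀ n, Fin (b n)) (r : ℕ → ℕ) (h : ∀ n, Fin (b n)) : Prop :=
  ∀ᶠ n in atTop, ∃ k, r n ≤ k ∧ k < r (n + 1) ∧ f k = h k

/-- `𝔟_b^eq`: the least size of a family `F ⊆ ∏b` not `⊏•`-dominated by any single
pair `(I,h) ∈ 𝕀 × ∏b`. -/
noncomputable def bEq (b : ℕ → ℕ) : Cardinal :=
  sInf {c : Cardinal | ∃ F : Set (∀ n, Fin (b n)), #F = c ∧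
    ¬∃ r : ℕ → ℕ, ∃ h : ∀ n, Fin (b n), IsIntervalPartition r ∧ ∀ f ∈ F, SqBullet f r h}

/-- `𝔡_b^eq`: the least size of a family `D ⊆ 𝕀 × ∏b` which is `⊏•`-dominating. -/
noncomputable def dEq (b : ℕ → ℕ) : Cardinal :=
  sInf {c : Cardinal | ∃ D : Set ((ℕ → ℕ) × (∀ n, Fin (b n))),
    (∀ p ∈ D, IsIntervalPartition p.1) ∧ #D = c ∧
    ∀ f : ∀ n, Fin (b n), ∃ p ∈ D, SqBullet f p.1 p.2}

/-- `add(M)`: the least cardinality of a family of meager subsets of `X` whose union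
is not meager. -/
noncomputable def addMeager (X : Type*) [TopologicalSpace X] : Cardinal :=
  sInf {c : Cardinal | ∃ J : Set (Set X), (∀ A ∈ J, IsMeagre A) ∧ #J = c ∧
    ¬IsMeagre (⋃₀ J)}

/-!
Fix open sets `V k` listing each basic open set infinitely often. Inside a nonempty open set `S`,
at level `k`, choose `b k` disjoint small open pieces with closures in `S` (and in `V k` if `S`
meets it) that do not cover `S`. Iterating gives, for every branch `t : ∀ k, Option (Fin (b k))`,
a decreasing sequence of open cells: the letter `some i` selects the `i`-th piece, `none` the
uncovered rest. To `f ∈ ∏b` attach the meagre set of points that from some level `k` on lie in no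
cell selecting the piece `f k`.

Suppose these sets, for `f ∈ F`, had meagre union, missing `⋂ n, U n` for decreasing dense open
`U n`. Treating the finitely many cells of level `r n` one at a time yields an interval partition
`r` and `h ∈ ∏b` such that every such cell can be continued into `U n` using on `[r n, r (n + 1))`
only the letters `none` and `some (h k)`, the latter at least once. If `f` is not `⊏• (r, h)`, use
these continuations on the infinitely many intervals where `f` avoids `h`, and `none` elsewhere.
The pieces used shrink, so by completeness the cells share a point; it lies in every `U n` and in
the set attached to `f`, a contradiction.
-/

open Metric TopologicalSpace Topology

section PerfectMetricSpace

variable {X : Type*} [MetricSpace X] [PerfectSpace X]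

theorem IsOpen.exists_closedBall_ssubset {W : Set X} (hW : IsOpen W) (hne : W.Nonempty)
    {ε : ℝ} (hε : 0 < ε) : ∃ x ρ, 0 < ρ ∧ ρ ≤ ε ∧ closedBall x ρ ⊂ W := by
  obtain ⟨x, hx⟩ := hne
  obtain ⟨y, hyW, hyx⟩ : (W ∩ {x}ᶜ).Nonempty :=
    nonempty_of_mem (inter_mem (mem_nhdsWithin_of_mem_nhds (hW.mem_nhds hx)) self_mem_nhdsWithin)
  obtain ⟨δ, hδ, hδW⟩ := isOpen_iff.mp hW x hx
  have hdist : 0 < dist y x := dist_pos.mpr hyx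
  set ρ := min ε (min (δ / 2) (dist y x / 2))
  have hρδ : ρ < δ := (min_le_right _ _).trans_lt ((min_le_left _ _).trans_lt (by linarith))
  have hρy : ρ < dist y x := (min_le_right _ _).trans_lt ((min_le_right _ _).trans_lt (by linarith))
  refine ⟨x, ρ, by positivity, min_le_left _ _, (ssubset_iff_of_subset ?_).mpr ⟨y, hyW, ?_⟩⟩
  · exact (closedBall_subset_ball hρδ).trans hδW
  · simpa using hρy

theorem IsOpen.exists_disjoint_closedBalls {W : Set X} (hW : IsOpen W) (hne : W.Nonempty)
    {ε : ℝ} (hε : 0 < ε) (m : ℕ) :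
    ∃ (c : Fin m → X) (ρ : Fin m → ℝ), (∀ i, 0 < ρ i ∧ ρ i ≤ ε) ∧
      Pairwise (fun i j => Disjoint (closedBall (c i) (ρ i)) (closedBall (c j) (ρ j))) ∧
      ⋃ i, closedBall (c i) (ρ i) ⊂ W := by
  induction m with
  | zero => exact ⟨Fin.elim0, Fin.elim0, Fin.rec0, fun i => i.elim0, by simpa using hne⟩
  | succ m ih =>
    obtain ⟨c, ρ, hρ, hdisj, hsub⟩ := ih
    have hW₀ : IsOpen (W \ ⋃ i, closedBall (c i) (ρ i)) :=
      hW.sdiff (isClosed_iUnion_of_finite fun _ => isClosed_closedBall)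
    obtain ⟨x, r, hr, hrε, hxr⟩ := hW₀.exists_closedBall_ssubset (nonempty_of_ssubset hsub) hε
    have hnew : ∀ i, Disjoint (closedBall x r) (closedBall (c i) (ρ i)) := fun i =>
      disjoint_left.mpr fun _ hz hz' => (hxr.subset hz).2 (mem_iUnion.mpr ⟨i, hz'⟩)
    refine ⟨Fin.snoc c x, Fin.snoc ρ r, fun i => ?_, ?_, ?_⟩
    · induction i using Fin.lastCases <;> simp [hr, hrε, hρ]
    · intro i j hij
      induction i using Fin.lastCases <;> induction j using Fin.lastCases <;>
        simp only [Fin.snoc_last, Fin.snoc_castSucc] at hij ⊢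
      · exact absurd rfl hij
      · exact hnew _
      · exact (hnew _).symm
      · exact hdisj fun h => hij (congrArg _ h)
    · rw [iUnion_fin_add_one_eq_iUnion_castSucc]
      simp only [Function.comp_def, Fin.snoc_castSucc, Fin.snoc_last]
      refine (ssubset_iff_of_subset (union_subset hsub.subset (hxr.subset.trans sdiff_subset))).mpr ?_
      obtain ⟨y, ⟨hyW, hy⟩, hyx⟩ := nonempty_of_ssubset hxr
      exact ⟨y, hyW, by simp_all⟩

end PerfectMetricSpace

def FrequentlyRefines {X : Type*} [TopologicalSpace X] (V : ℕ → Set X) : Prop :=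
  ∀ O, IsOpen O → O.Nonempty → ∃ᶠ k in atTop, (V k).Nonempty ∧ V k ⊆ O

theorem exists_isOpen_frequentlyRefines (X : Type*) [TopologicalSpace X]
    [SecondCountableTopology X] : ∃ V : ℕ → Set X, (∀ k, IsOpen (V k)) ∧ FrequentlyRefines V := by
  -- `∅` is added only to have a nonempty family to enumerate
  obtain ⟨e, he⟩ :=
    ((countable_countableBasis X).insert ∅).exists_eq_range (insert_nonempty _ _)
  have he_open : ∀ j, IsOpen (e j) := fun j => by
    rcases (he ▸ mem_range_self j : e j ∈ insert ∅ (countableBasis X)) with h | h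
    · exact h ▸ isOpen_empty
    · exact isOpen_of_mem_countableBasis h
  -- `V (Nat.pair j K) = e j` for every `K`
  refine ⟨fun k => e k.unpair.1, fun k => he_open _, ?_⟩
  rintro O hO ⟨x, hx⟩
  obtain ⟨v, hv, hxv, hvO⟩ := (isBasis_countableBasis X).exists_subset_of_mem_open hx hO
  obtain ⟨j, rfl⟩ : v ∈ range e := he ▸ mem_insert_of_mem _ hv
  refine frequently_atTop.mpr fun K => ⟨Nat.pair j K, Nat.right_le_pair j K, ?_⟩
  simpa using ⟨⟨x, hxv⟩, hvO⟩

theorem IsMeagre.exists_antitone_dense_isOpen {X : Type*} [TopologicalSpace X] [BaireSpace X]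
    {s : Set X} (hs : IsMeagre s) :
    ∃ U : ℕ → Set X, (∀ n, IsOpen (U n)) ∧ (∀ n, Dense (U n)) ∧ Antitone U ∧
      Disjoint s (⋂ n, U n) := by
  obtain ⟨t, hts, htG, htd⟩ := mem_residual.mp hs
  obtain ⟨u, hu, rfl⟩ := isGδ_iff_eq_iInter_nat.mp htG
  refine ⟨fun n => ⋂ m ∈ Iic n, u m, fun n => (finite_Iic n).isOpen_biInter fun m _ => hu m,
    fun n => htd.mono (subset_iInter₂ fun m _ => iInter_subset u m),
    fun n n' h => biInter_mono (Iic_subset_Iic.mpr h) fun _ _ => subset_rfl, ?_⟩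
  refine disjoint_right.mpr fun x hx => hts (mem_iInter.mpr fun n => ?_)
  exact mem_iInter₂.mp (mem_iInter.mp hx n) n (mem_Iic.mpr le_rfl)

theorem exists_not_sqBullet {b : ℕ → ℕ} (hb : ∀ n, 2 ≤ b n) (r : ℕ → ℕ) (h : ∀ n, Fin (b n)) :
    ∃ f, ¬SqBullet f r h := by
  have hne : ∀ k, ∃ i, i ≠ h k := fun k =>
    haveI := Fin.nontrivial_iff_two_le.mpr (hb k)
    exists_ne (h k)
  choose f hf using hne
  exact ⟨f, fun hsq => by
    obtain ⟨n, k, -, -, hk⟩ := hsq.exists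
    exact hf k hk⟩

theorem diag_eq_of_stabilizing {β : ℕ → Type*} {s : ℕ → ∀ k, β k} {r : ℕ → ℕ} (hr : StrictMono r)
    (hs : ∀ n k, k < r n → s (n + 1) k = s n k) {m k : ℕ} (hk : k < r m) : s (k + 1) k = s m k := by
  have key : ∀ {m k}, k < r m → ∀ n, m ≤ n → s n k = s m k := by
    intro m k hk n hn
    induction n, hn using Nat.le_induction with
    | base => rfl
    | succ n hmn ih => rw [hs n k (hk.trans_le (hr.monotone hmn)), ih]
  rcases le_total m (k + 1) with h | h
  · exact key hk _ h
  · exact (key (Nat.lt_of_succ_le (hr.id_le (k + 1))) m h).symm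

theorem IsIntervalPartition.exists_mem_Ico {r : ℕ → ℕ} (hr : IsIntervalPartition r) (k : ℕ) :
    ∃ n, r n ≤ k ∧ k < r (n + 1) := by
  induction k with
  | zero => exact ⟨0, hr.1.le, hr.1.symm.trans_lt (hr.2 zero_lt_one)⟩
  | succ k ih =>
    obtain ⟨n, h₁, h₂⟩ := ih
    rcases (Nat.succ_le_of_lt h₂).lt_or_eq with h | h
    · exact ⟨n, by omega, h⟩
    · exact ⟨n + 1, h.ge, h.trans_lt (hr.2 (lt_add_one _))⟩

abbrev Branch (b : ℕ → ℕ) := ∀ k, Option (Fin (b k))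

def truncate {b : ℕ → ℕ} (n : ℕ) (t : Branch b) : Branch b := fun k => if k < n then t k else none

theorem finite_range_truncate (b : ℕ → ℕ) (n : ℕ) : (range (truncate (b := b) n)).Finite := by
  refine (finite_range fun s : ∀ k : Fin n, Option (Fin (b k)) =>
    truncate n fun k => if hk : k < n then s ⟨k, hk⟩ else none).subset ?_
  rintro _ ⟨t, rfl⟩
  exact ⟨fun k => t k, funext fun k => by by_cases hk : k < n <;> simp [truncate, hk]⟩

structure Splitting (X : Type*) [MetricSpace X] (b : ℕ → ℕ) (V : ℕ → Set X) where
  piece : Set X → (k : ℕ) → Fin (b k) → Set X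
  isOpen_piece (S : Set X) (k : ℕ) (i : Fin (b k)) : IsOpen (piece S k i)
  isBounded_piece (S : Set X) (k : ℕ) (i : Fin (b k)) : Bornology.IsBounded (piece S k i)
  diam_piece_le (S : Set X) (k : ℕ) (i : Fin (b k)) : diam (piece S k i) ≤ (1 / 2) ^ k
  closure_piece_subset (S : Set X) (k : ℕ) (i : Fin (b k)) : closure (piece S k i) ⊆ S
  piece_subset_of_inter_nonempty (S : Set X) (k : ℕ) (i : Fin (b k)) :
    (S ∩ V k).Nonempty → piece S k i ⊆ V k
  pairwise_disjoint_piece (S : Set X) (k : ℕ) :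
    Pairwise fun i j => Disjoint (piece S k i) (piece S k j)
  piece_nonempty {S : Set X} (hS : IsOpen S) (hne : S.Nonempty) (k : ℕ) (i : Fin (b k)) :
    (piece S k i).Nonempty
  diff_nonempty {S : Set X} (hS : IsOpen S) (hne : S.Nonempty) (k : ℕ) :
    (S \ ⋃ i, closure (piece S k i)).Nonempty

theorem Splitting.nonempty {X : Type*} [MetricSpace X] [PerfectSpace X] {V : ℕ → Set X}
    (hV : ∀ k, IsOpen (V k)) (b : ℕ → ℕ) : Nonempty (Splitting X b V) := by
  have key : ∀ (S : Set X) (k : ℕ), ∃ p : Fin (b k) → Set X,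
      (∀ i, IsOpen (p i) ∧ Bornology.IsBounded (p i) ∧ diam (p i) ≤ (1 / 2) ^ k ∧
        closure (p i) ⊆ S ∧ ((S ∩ V k).Nonempty → p i ⊆ V k)) ∧
      (Pairwise fun i j => Disjoint (p i) (p j)) ∧
      (IsOpen S → S.Nonempty → (∀ i, (p i).Nonempty) ∧ (S \ ⋃ i, closure (p i)).Nonempty) := by
    intro S k
    by_cases hS : IsOpen S ∧ S.Nonempty
    swap
    · exact ⟨fun _ => ∅, fun _ => by simp, fun _ _ _ => disjoint_bot_left,
        fun h₁ h₂ => absurd ⟨h₁, h₂⟩ hS⟩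
    obtain ⟨W, hW, hWne, hWS, hWV⟩ : ∃ W, IsOpen W ∧ W.Nonempty ∧ W ⊆ S ∧
        ((S ∩ V k).Nonempty → W ⊆ V k) := by
      by_cases h : (S ∩ V k).Nonempty
      · exact ⟨S ∩ V k, hS.1.inter (hV k), h, inter_subset_left, fun _ => inter_subset_right⟩
      · exact ⟨S, hS.1, hS.2, subset_rfl, fun h' => absurd h' h⟩
    obtain ⟨c, ρ, hρ, hdisj, hsub⟩ :=
      hW.exists_disjoint_closedBalls hWne (ε := (1 / 2) ^ k / 2) (by positivity) (b k)
    have hcl : ∀ i, closure (ball (c i) (ρ i)) ⊆ W := fun i =>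
      closure_ball_subset_closedBall.trans ((subset_iUnion _ i).trans hsub.subset)
    refine ⟨fun i => ball (c i) (ρ i), fun i => ⟨isOpen_ball, isBounded_ball, ?_, (hcl i).trans hWS,
      fun h => subset_closure.trans ((hcl i).trans (hWV h))⟩,
      fun i j hij => (hdisj hij).mono ball_subset_closedBall ball_subset_closedBall,
      fun _ _ => ⟨fun i => nonempty_ball.mpr (hρ i).1, ?_⟩⟩
    · linarith [diam_ball (x := c i) (hρ i).1.le, (hρ i).2]
    · obtain ⟨y, hyW, hy⟩ := nonempty_of_ssubset hsub
      exact ⟨y, hWS hyW, fun hy' => hy (iUnion_mono (fun i => closure_ball_subset_closedBall) hy')⟩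
  choose p hp hdisj hne using key
  exact ⟨{ piece := p
           isOpen_piece := fun S k i => (hp S k i).1
           isBounded_piece := fun S k i => (hp S k i).2.1
           diam_piece_le := fun S k i => (hp S k i).2.2.1
           closure_piece_subset := fun S k i => (hp S k i).2.2.2.1
           piece_subset_of_inter_nonempty := fun S k i => (hp S k i).2.2.2.2
           pairwise_disjoint_piece := hdisj
           piece_nonempty := fun hS hne' k => (hne _ k hS hne').1
           diff_nonempty := fun hS hne' k => (hne _ k hS hne').2 }⟩

namespace Splitting

variable {X : Type*} [MetricSpace X] {b : ℕ → ℕ} {V : ℕ → Set X} (σ : Splitting X b V)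

def child (S : Set X) (k : ℕ) : Option (Fin (b k)) → Set X
  | some i => σ.piece S k i
  | none => S \ ⋃ i, closure (σ.piece S k i)

def cell (t : Branch b) : ℕ → Set X
  | 0 => univ
  | k + 1 => σ.child (cell t k) k (t k)

theorem child_subset (S : Set X) (k : ℕ) (a : Option (Fin (b k))) : σ.child S k a ⊆ S := by
  cases a with
  | none => exact sdiff_subset
  | some i => exact subset_closure.trans (σ.closure_piece_subset S k i)

theorem isOpen_child {S : Set X} (hS : IsOpen S) (k : ℕ) (a : Option (Fin (b k))) :
    IsOpen (σ.child S k a) := by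
  cases a with
  | none => exact hS.sdiff (isClosed_iUnion_of_finite fun _ => isClosed_closure)
  | some i => exact σ.isOpen_piece S k i

theorem child_nonempty {S : Set X} (hS : IsOpen S) (hne : S.Nonempty) (k : ℕ)
    (a : Option (Fin (b k))) : (σ.child S k a).Nonempty := by
  cases a with
  | none => exact σ.diff_nonempty hS hne k
  | some i => exact σ.piece_nonempty hS hne k i

theorem pairwise_disjoint_child (S : Set X) (k : ℕ) :
    Pairwise fun a a' => Disjoint (σ.child S k a) (σ.child S k a') := by
  have hsome_none : ∀ i, Disjoint (σ.child S k (some i)) (σ.child S k none) := fun i =>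
    disjoint_left.mpr fun _ hz hz' => hz'.2 (mem_iUnion.mpr ⟨i, subset_closure hz⟩)
  rintro (_ | i) (_ | j) h
  · exact absurd rfl h
  · exact (hsome_none j).symm
  · exact hsome_none i
  · exact σ.pairwise_disjoint_piece S k fun hij => h (congrArg some hij)

theorem exists_child_inter_nonempty {S O : Set X} (hO : IsOpen O) (h : (S ∩ O).Nonempty) (k : ℕ) :
    ∃ a, (σ.child S k a ∩ O).Nonempty := by
  obtain ⟨x, hxS, hxO⟩ := h
  by_cases hx : ∃ i, x ∈ closure (σ.piece S k i)
  · obtain ⟨i, hi⟩ := hx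
    exact ⟨some i, inter_comm O _ ▸ mem_closure_iff.mp hi O hO hxO⟩
  · exact ⟨none, x, ⟨hxS, by simpa using hx⟩, hxO⟩

theorem isOpen_cell (t : Branch b) : ∀ n, IsOpen (σ.cell t n)
  | 0 => isOpen_univ
  | n + 1 => σ.isOpen_child (isOpen_cell t n) n (t n)

theorem cell_nonempty [Nonempty X] (t : Branch b) : ∀ n, (σ.cell t n).Nonempty
  | 0 => univ_nonempty
  | n + 1 => σ.child_nonempty (σ.isOpen_cell t n) (cell_nonempty t n) n (t n)

theorem cell_antitone (t : Branch b) : Antitone (σ.cell t) :=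
  antitone_nat_of_succ_le fun n => σ.child_subset _ n (t n)

theorem cell_congr {t t' : Branch b} {n : ℕ} (h : ∀ k < n, t k = t' k) :
    σ.cell t n = σ.cell t' n := by
  induction n with
  | zero => rfl
  | succ n ih => rw [cell, cell, ih fun k hk => h k (by omega), h n (by omega)]

theorem cell_truncate (t : Branch b) (n : ℕ) : σ.cell (truncate n t) n = σ.cell t n :=
  σ.cell_congr fun _ hk => if_pos hk

theorem cell_update_succ (t : Branch b) (k : ℕ) (a : Option (Fin (b k))) :
    σ.cell (Function.update t k a) (k + 1) = σ.child (σ.cell t k) k a := by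
  have h : σ.cell (Function.update t k a) k = σ.cell t k :=
    σ.cell_congr fun j hj => Function.update_of_ne hj.ne _ _
  rw [cell, Function.update_self, h]

theorem eq_of_cell_inter_nonempty {t t' : Branch b} {n : ℕ}
    (h : (σ.cell t n ∩ σ.cell t' n).Nonempty) : ∀ k < n, t k = t' k := by
  induction n with
  | zero => exact fun k hk => absurd hk (Nat.not_lt_zero k)
  | succ n ih =>
    have hn := ih (h.mono (inter_subset_inter (σ.cell_antitone t n.le_succ)
      (σ.cell_antitone t' n.le_succ)))
    intro k hk
    rcases Nat.lt_succ_iff_lt_or_eq.mp hk with hk | rfl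
    · exact hn k hk
    by_contra hne
    obtain ⟨x, hx, hx'⟩ := h
    rw [cell, σ.cell_congr hn] at hx
    exact (σ.pairwise_disjoint_child _ k hne).ne_of_mem hx hx' rfl

theorem exists_cell_inter_nonempty {O : Set X} (hO : IsOpen O) {t : Branch b} {n : ℕ}
    (h : (σ.cell t n ∩ O).Nonempty) {m : ℕ} (hnm : n ≤ m) :
    ∃ t', (∀ k < n, t' k = t k) ∧ (σ.cell t' m ∩ O).Nonempty := by
  induction m, hnm using Nat.le_induction with
  | base => exact ⟨t, fun _ _ => rfl, h⟩
  | succ m hnm ih =>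
    obtain ⟨t', ht', hne⟩ := ih
    obtain ⟨a, ha⟩ := σ.exists_child_inter_nonempty hO hne m
    refine ⟨Function.update t' m a, fun k hk => ?_, by rwa [σ.cell_update_succ]⟩
    rw [Function.update_of_ne (by omega), ht' k hk]

theorem exists_cell_subset (hV : ∀ k, IsOpen (V k)) (hVO : FrequentlyRefines V) {O : Set X}
    (hO : IsOpen O) {t : Branch b} {n : ℕ} (h : (σ.cell t n ∩ O).Nonempty) (K : ℕ) :
    ∃ k, K ≤ k ∧ ∀ i : Fin (b k),
      ∃ t', (∀ j < n, t' j = t j) ∧ t' k = some i ∧ σ.cell t' (k + 1) ⊆ O := by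
  obtain ⟨k, hk, ⟨z, hz⟩, hVsub⟩ :=
    frequently_atTop.mp (hVO _ ((σ.isOpen_cell t n).inter hO) h) (max n K)
  obtain ⟨t', ht', hne⟩ :=
    σ.exists_cell_inter_nonempty (hV k) ⟨z, (hVsub hz).1, hz⟩ (le_of_max_le_left hk)
  refine ⟨k, le_of_max_le_right hk, fun i => ⟨Function.update t' k (some i), fun j hj => ?_,
    Function.update_self .., ?_⟩⟩
  · rw [Function.update_of_ne (by omega), ht' j hj]
  · rw [σ.cell_update_succ]
    exact (σ.piece_subset_of_inter_nonempty _ k i hne).trans (hVsub.trans inter_subset_right)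

def avoidSet (f : ∀ k, Fin (b k)) : Set X :=
  {x | ∀ᶠ k in atTop, ∀ t : Branch b, t k = some (f k) → x ∉ σ.cell t (k + 1)}

theorem isMeagre_avoidSet (hV : ∀ k, IsOpen (V k)) (hVO : FrequentlyRefines V)
    (f : ∀ k, Fin (b k)) : IsMeagre (σ.avoidSet f) := by
  set W : ℕ → Set X := fun k => ⋃ (t : Branch b) (_ : t k = some (f k)), σ.cell t (k + 1)
  have hW : ∀ K, IsOpen (⋃ k ≥ K, W k) ∧ Dense (⋃ k ≥ K, W k) := fun K => by
    refine ⟨isOpen_biUnion fun k _ => isOpen_biUnion fun t _ => σ.isOpen_cell t _,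
      dense_iff_inter_open.mpr fun U hU hUne => ?_⟩
    have : Nonempty X := ⟨hUne.some⟩
    obtain ⟨k, hk, hsub⟩ :=
      σ.exists_cell_subset hV hVO hU (t := fun _ => none) (n := 0) (by simpa [cell] using hUne) K
    obtain ⟨t, -, htk, htU⟩ := hsub (f k)
    obtain ⟨x, hx⟩ := σ.cell_nonempty t (k + 1)
    exact ⟨x, htU hx, mem_biUnion hk (mem_biUnion htk hx)⟩
  refine mem_of_superset (countable_iInter_mem.mpr fun K => residual_of_dense_open (hW K).1 (hW K).2)
    fun x hx hxA => ?_
  obtain ⟨K, hK⟩ := eventually_atTop.mp hxA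
  obtain ⟨k, hk, t, htk, hxt⟩ : ∃ k ≥ K, ∃ t : Branch b, t k = some (f k) ∧ x ∈ σ.cell t (k + 1) := by
    simpa [W] using mem_iInter.mp hx K
  exact hK k hk t htk hxt

def LeadsInto (O : Set X) (h : ∀ k, Fin (b k)) (L L' : ℕ) (t t' : Branch b) : Prop :=
  (∀ k < L, t' k = t k) ∧ (∀ k, L ≤ k → k < L' → t' k = none ∨ t' k = some (h k)) ∧
    σ.cell t' L' ⊆ O ∧ ∃ l, L ≤ l ∧ l < L' ∧ t' l = some (h l)

variable {σ} in
theorem LeadsInto.congr {O : Set X} {h h' : ∀ k, Fin (b k)} {L L' : ℕ} {t t' : Branch b}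
    (hh : ∀ k, L ≤ k → k < L' → h k = h' k) (H : σ.LeadsInto O h L L' t t') :
    σ.LeadsInto O h' L L' t t' := by
  obtain ⟨hagree, hletters, hsub, l, hl₁, hl₂, hl⟩ := H
  refine ⟨hagree, fun k hk₁ hk₂ => hh k hk₁ hk₂ ▸ hletters k hk₁ hk₂, hsub, l, hl₁, hl₂, ?_⟩
  rw [hl, hh l hl₁ hl₂]

theorem exists_leadsInto_of_finset [Nonempty X] (hb : ∀ k, 0 < b k) (hV : ∀ k, IsOpen (V k))
    (hVO : FrequentlyRefines V) {O : Set X} (hO : IsOpen O) (hOd : Dense O) (L : ℕ)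
    (E : Finset (Branch b)) :
    ∃ L' > L, ∃ h : ∀ k, Fin (b k), ∀ t ∈ E, ∃ t', σ.LeadsInto O h L L' t t' := by
  classical
  induction E using Finset.induction_on with
  | empty => exact ⟨L + 1, by omega, fun k => ⟨0, hb k⟩, by simp⟩
  | insert s E _ ih =>
    obtain ⟨L₁, hL₁, h₁, H₁⟩ := ih
    -- truncation makes the letters of `s` on `[L, L₁)`, and those of the old branches on
    -- `[L₁, k]`, equal to `none`
    obtain ⟨k, hk, hesc⟩ := σ.exists_cell_subset hV hVO hO
      (hOd.inter_open_nonempty _ (σ.isOpen_cell _ L₁) (σ.cell_nonempty (truncate L s) L₁)) L₁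
    obtain ⟨t₀, ht₀, ht₀k, ht₀O⟩ := hesc ⟨0, hb k⟩
    refine ⟨k + 1, by omega, fun j => if j < L₁ then h₁ j else (t₀ j).getD ⟨0, hb j⟩, ?_⟩
    rintro t ht
    rcases Finset.mem_insert.mp ht with rfl | ht
    · refine ⟨t₀, fun j hj => ?_, fun j hj₁ hj₂ => ?_, ht₀O, k, by omega, by omega, ?_⟩
      · rw [ht₀ j (by omega)]
        exact if_pos hj
      · rcases lt_or_ge j L₁ with hj | hj
        · exact Or.inl ((ht₀ j hj).trans (if_neg (by omega)))
        · simp only [if_neg (not_lt.mpr hj)]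
          cases t₀ j <;> simp
      · simp [ht₀k, show ¬k < L₁ by omega]
    · obtain ⟨t₁, ht₁, hletters, hsub, l, hl₁, hl₂, hl⟩ := H₁ t ht
      refine ⟨truncate L₁ t₁, fun j hj => ?_, fun j hj₁ hj₂ => ?_, ?_, l, hl₁, by omega, ?_⟩
      · rw [← ht₁ j hj]
        exact if_pos (by omega)
      · by_cases hj : j < L₁
        · simpa [truncate, hj] using hletters j hj₁ hj
        · exact Or.inl (if_neg hj)
      · exact (σ.cell_antitone _ (by omega)).trans ((σ.cell_truncate t₁ L₁).symm ▸ hsub)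
      · simp [truncate, hl₂, hl]

theorem exists_leadsInto [Nonempty X] (hb : ∀ k, 0 < b k) (hV : ∀ k, IsOpen (V k))
    (hVO : FrequentlyRefines V) {O : Set X} (hO : IsOpen O) (hOd : Dense O) (L : ℕ) :
    ∃ L' > L, ∃ h : ∀ k, Fin (b k), ∀ t, ∃ t', σ.LeadsInto O h L L' t t' := by
  obtain ⟨L', hL', h, H⟩ :=
    σ.exists_leadsInto_of_finset hb hV hVO hO hOd L (finite_range_truncate b L).toFinset
  refine ⟨L', hL', h, fun t => ?_⟩
  obtain ⟨t', ht', hrest⟩ := H (truncate L t) (by simp)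
  exact ⟨t', fun k hk => (ht' k hk).trans (if_pos hk), hrest⟩

theorem exists_strategy [Nonempty X] (hb : ∀ k, 0 < b k) (hV : ∀ k, IsOpen (V k))
    (hVO : FrequentlyRefines V) {U : ℕ → Set X} (hU : ∀ n, IsOpen (U n)) (hUd : ∀ n, Dense (U n)) :
    ∃ r h, IsIntervalPartition r ∧ ∀ n t, ∃ t', σ.LeadsInto (U n) h (r n) (r (n + 1)) t t' := by
  choose L' hL' H T hT using fun n L => σ.exists_leadsInto hb hV hVO (hU n) (hUd n) L
  let r : ℕ → ℕ := fun n => Nat.rec (motive := fun _ => ℕ) 0 (fun n Ln => L' n Ln) n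
  have hr : StrictMono r := strictMono_nat_of_lt_succ fun n => hL' n (r n)
  -- `h` takes the letters `H n (r n)` of stage `n` on `[r n, r (n + 1))`
  let G : ℕ → ∀ k, Fin (b k) := fun n =>
    Nat.rec (motive := fun _ => ∀ k, Fin (b k)) (H 0 0)
      (fun n g k => if k < r n then g k else H n (r n) k) n
  have hG : ∀ n k, k < r n → G (n + 1) k = G n k := fun n k hk => by
    show (if k < r n then G n k else H n (r n) k) = G n k
    exact if_pos hk
  refine ⟨r, fun k => G (k + 1) k, ⟨rfl, hr⟩, fun n t => ⟨T n (r n) t, (hT n (r n) t).congr ?_⟩⟩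
  intro k hk₁ hk₂
  rw [diag_eq_of_stabilizing hr hG (m := n + 1) hk₂]
  exact (if_neg (not_lt.mpr hk₁)).symm

theorem exists_branch {U : ℕ → Set X} {r : ℕ → ℕ} {h : ∀ k, Fin (b k)} (hr : StrictMono r)
    (hstrat : ∀ n t, ∃ t', σ.LeadsInto (U n) h (r n) (r (n + 1)) t t') (P : ℕ → Prop) :
    ∃ β : Branch b, (∀ n k, r n ≤ k → k < r (n + 1) → β k = none ∨ P n ∧ β k = some (h k)) ∧
      ∀ n, P n → σ.cell β (r (n + 1)) ⊆ U n ∧ ∃ l ≥ r n, β l = some (h l) := by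
  classical
  choose T hT using hstrat
  -- follow the strategy in the stages `n` with `P n`, and use only `none` in the others
  let g : ℕ → Branch b := fun n =>
    Nat.rec (fun _ => none) (fun n t => if P n then T n t else truncate (r n) t) n
  have hg_succ : ∀ n, g (n + 1) = if P n then T n (g n) else truncate (r n) (g n) := fun _ => rfl
  have hg : ∀ n k, k < r n → g (n + 1) k = g n k := by
    intro n k hk
    rw [hg_succ]
    split_ifs
    exacts [(hT n (g n)).1 k hk, if_pos hk]
  refine ⟨fun k => g (k + 1) k, fun n k hk₁ hk₂ => ?_, fun n hn => ?_⟩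
  · dsimp only
    rw [diag_eq_of_stabilizing hr hg hk₂, hg_succ]
    split_ifs with hPn
    · exact (hT n (g n)).2.1 k hk₁ hk₂ |>.imp_right fun h' => ⟨hPn, h'⟩
    · exact Or.inl (if_neg (by omega))
  · have hβ : ∀ k < r (n + 1), g (k + 1) k = T n (g n) k := fun k hk => by
      rw [diag_eq_of_stabilizing hr hg hk, hg_succ, if_pos hn]
    obtain ⟨-, -, hsub, l, hl₁, hl₂, hl⟩ := hT n (g n)
    exact ⟨by rwa [σ.cell_congr hβ], l, hl₁, (hβ l hl₂).trans hl⟩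

theorem exists_forall_mem_cell [CompleteSpace X] [Nonempty X] {β : Branch b}
    (hβ : ∀ N, ∃ l ≥ N, ∃ i, β l = some i) : ∃ x, ∀ m, x ∈ σ.cell β m := by
  choose ℓ hℓ i hi using hβ
  have hcell : ∀ m, σ.cell β (ℓ m + 1) = σ.piece (σ.cell β (ℓ m)) (ℓ m) (i m) := fun m => by
    rw [cell, hi m]
    rfl
  have hinter : ∀ N, (⋂ m ≤ N, closure (σ.cell β (ℓ m + 1))).Nonempty := fun N => by
    obtain ⟨y, hy⟩ := σ.cell_nonempty β ((Finset.range (N + 1)).sup ℓ + 1)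
    refine ⟨y, mem_iInter₂.mpr fun m hm => subset_closure (σ.cell_antitone β ?_ hy)⟩
    exact Nat.succ_le_succ (Finset.le_sup (Finset.mem_range.mpr (Nat.lt_succ_of_le hm)))
  have hdiam : Tendsto (fun m => diam (closure (σ.cell β (ℓ m + 1)))) atTop (𝓝 0) := by
    refine squeeze_zero (fun _ => diam_nonneg) (fun m => ?_)
      (tendsto_pow_atTop_nhds_zero_of_lt_one (r := (1 / 2 : ℝ)) (by norm_num) (by norm_num))
    rw [diam_closure, hcell]
    exact (σ.diam_piece_le ..).trans (pow_le_pow_of_le_one (by norm_num) (by norm_num) (hℓ m))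
  obtain ⟨x, hx⟩ := nonempty_iInter_of_nonempty_biInter (fun m => isClosed_closure)
    (fun m => by simpa [hcell] using (σ.isBounded_piece ..).closure) hinter hdiam
  refine ⟨x, fun m => σ.cell_antitone β (hℓ m) ?_⟩
  have hxm := mem_iInter.mp hx m
  rw [hcell] at hxm
  exact σ.closure_piece_subset _ _ _ hxm

theorem exists_sqBullet_of_disjoint [CompleteSpace X] [Nonempty X] (hb : ∀ k, 0 < b k)
    (hV : ∀ k, IsOpen (V k)) (hVO : FrequentlyRefines V) {U : ℕ → Set X}
    (hU : ∀ n, IsOpen (U n)) (hUd : ∀ n, Dense (U n)) (hUa : Antitone U) :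
    ∃ r h, IsIntervalPartition r ∧
      ∀ f, Disjoint (σ.avoidSet f) (⋂ n, U n) → SqBullet f r h := by
  obtain ⟨r, h, hr, hstrat⟩ := σ.exists_strategy hb hV hVO hU hUd
  refine ⟨r, h, hr, fun f hf => ?_⟩
  by_contra hnot
  set P : ℕ → Prop := fun n => ∀ k, r n ≤ k → k < r (n + 1) → f k ≠ h k
  have hP : ∃ᶠ n in atTop, P n := (not_eventually.mp hnot).mono fun n hn => by simpa [P] using hn
  obtain ⟨β, hβ, hβP⟩ := σ.exists_branch hr.2 hstrat P
  obtain ⟨x, hx⟩ := σ.exists_forall_mem_cell (β := β) fun N => by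
    obtain ⟨n, hn, hPn⟩ := frequently_atTop.mp hP N
    obtain ⟨-, l, hl, hβl⟩ := hβP n hPn
    exact ⟨l, hn.trans ((hr.2.id_le n).trans hl), _, hβl⟩
  have hxA : x ∈ σ.avoidSet f := Eventually.of_forall fun k t htk hxt => by
    have htβ := σ.eq_of_cell_inter_nonempty ⟨x, hxt, hx (k + 1)⟩ k (lt_add_one k)
    obtain ⟨n, hk₁, hk₂⟩ := hr.exists_mem_Ico k
    rcases hβ n k hk₁ hk₂ with hβk | ⟨hPn, hβk⟩
    · simp [htk, hβk] at htβ
    · exact hPn k hk₁ hk₂ (by simpa [htk, hβk] using htβ)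
  have hxU : x ∈ ⋂ n, U n := mem_iInter.mpr fun n => by
    obtain ⟨n', hn', hPn'⟩ := frequently_atTop.mp hP n
    exact hUa hn' ((hβP n' hPn').1 (hx _))
  exact disjoint_left.mp hf hxA hxU

end Splitting

/-- If `b(n) ≥ 2` for all `n`, then `add(M) ≤ 𝔟_b^eq`, where `M` is the meager ideal
on any perfect Polish space. -/
theorem addMeager_le_bEq (b : ℕ → ℕ) (hb : ∀ n, 2 ≤ b n)
    (X : Type) [TopologicalSpace X] [PolishSpace X] (hX : Perfect (Set.univ : Set X)) :
    addMeager X ≤ bEq b := by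
  rcases isEmpty_or_nonempty X with hX₀ | hX₀
  · have hmeagre : ∀ s : Set X, IsMeagre s := fun s => Subsingleton.elim ∅ s ▸ IsMeagre.empty
    simp [addMeager, hmeagre]
  let := upgradeIsCompletelyMetrizable X
  have : PerfectSpace X := ⟨hX.acc⟩
  obtain ⟨V, hV, hVO⟩ := exists_isOpen_frequentlyRefines X
  obtain ⟨σ⟩ := Splitting.nonempty hV b
  refine le_csInf ⟨_, univ, rfl, fun ⟨r, h, _, hall⟩ =>
    (exists_not_sqBullet hb r h).elim fun f hf => hf (hall f (mem_univ f))⟩ ?_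
  rintro _ ⟨F, rfl, hF⟩
  have hJ : ¬IsMeagre (⋃₀ (σ.avoidSet '' F)) := fun hJ => by
    obtain ⟨U, hU, hUd, hUa, hdisj⟩ := hJ.exists_antitone_dense_isOpen
    obtain ⟨r, h, hr, hsq⟩ :=
      σ.exists_sqBullet_of_disjoint (fun k => zero_lt_two.trans_le (hb k)) hV hVO hU hUd hUa
    exact hF ⟨r, h, hr, fun f hf =>
      hsq f (hdisj.mono_left (subset_sUnion_of_mem (mem_image_of_mem _ hf)))⟩
  calc addMeager X
      ≤ #(σ.avoidSet '' F) :=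
        csInf_le' ⟨_, forall_mem_image.mpr fun f _ => σ.isMeagre_avoidSet hV hVO f, rfl, hJ⟩
    _ ≤ #F := mk_image_le
end

section
/- Let D ⊆ ω^ω be a ≤*-dominating family all of whose members b satisfy b(n) ≥ 2 for every n. Then min{𝔟_b^eq : b ∈ D} ≤ non(MA) and cov(MA) ≤ ∏_{b∈D} 𝔡_b^eq (cardinal product), where MA is the ideal of meager-additive subsets of 2^ω. -/
open Cardinal Set Filter

/-- The Cantor space `2^ω` as `ℕ → Bool`, a topological group under coordinatewise
addition mod 2 (i.e. pointwise `xor`). -/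
abbrev Cantor : Type := ℕ → Bool

/-- The algebraic sum `A + X` of two subsets of `2^ω` (coordinatewise mod-2 addition). -/
def cantorSum (A X : Set Cantor) : Set Cantor :=
  Set.image2 (fun a x => fun n => xor (a n) (x n)) A X

/-- `X ⊆ 2^ω` is meager-additive: `A + X` is meager for every meager `A`. -/
def IsMeagerAdditive (X : Set Cantor) : Prop :=
  ∀ A : Set Cantor, IsMeagre A → IsMeagre (cantorSum A X)

/-- `non(MA)`: the least cardinality of a non-meager-additive subset of `2^ω`. -/
noncomputable def nonMA : Cardinal :=
  sInf {c : Cardinal | ∃ Y : Set Cantor, #Y = c ∧ ¬IsMeagerAdditive Y}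

/-- `cov(MA)`: the least cardinality of a family of meager-additive sets covering `2^ω`. -/
noncomputable def covMA : Cardinal :=
  sInf {c : Cardinal | ∃ J : Set (Set Cantor),
    (∀ Y ∈ J, IsMeagerAdditive Y) ∧ #J = c ∧ ⋃₀ J = Set.univ}

/-! Every meagre subset of `2^ω` is contained in a set of the form
`{z | for almost all k, z disagrees with y on [n k, n (k+1))}`. Given a non-meager-additive `Y`
and such a set `A` with `A + Y` non-meagre, choose `b ∈ D` with `b k ≥ 2^(n (k+1) - n k)` for
almost all `k`, and code each `x ∈ Y` by its block patterns, read in `∏b`. If a single `(I, h)`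
caught all these codes, every `x ∈ Y` would copy the pattern decoded from `h` on some block inside
almost every `I`-interval; then `A + Y` would lie in the set of the same form for the blocks
grouped by `I` and the pattern `y + decode h`, hence be meagre. So `𝔟_b^eq ≤ |Y|`.
For the covering number, singletons are meager-additive, so `cov(MA) ≤ 𝔠`, while a dominating
family is infinite and each `𝔡_b^eq ≥ 2`. -/

open PiNat Function

universe u

def blockIndex (n : ℕ → ℕ) (i : ℕ) : ℕ := Nat.findGreatest (fun k => n k ≤ i) i

lemma blockIndex_eq_of_mem_Ico {n : ℕ → ℕ} (hn : StrictMono n) {i k : ℕ}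
    (hi : i ∈ Ico (n k) (n (k + 1))) : blockIndex n i = k :=
  Nat.findGreatest_eq_iff.2 ⟨hn.le_apply.trans hi.1, fun _ => hi.1,
    fun _ hkj _ => not_le.2 (hi.2.trans_le (hn.monotone hkj))⟩

lemma eqOn_blockIndex {α : Type*} {n : ℕ → ℕ} (hn : StrictMono n) (u : ℕ → ℕ → α) (k : ℕ) :
    EqOn (fun i => u (blockIndex n i) i) (u k) (Ico (n k) (n (k + 1))) := fun i hi => by
  simp only [blockIndex_eq_of_mem_Ico hn hi]

section BlockMeagre

variable {α : Type*} [TopologicalSpace α] [DiscreteTopology α]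

def eventuallyDisagree (n : ℕ → ℕ) (y : ℕ → α) : Set (ℕ → α) :=
  {z | ∀ᶠ k in atTop, ¬EqOn z y (Ico (n k) (n (k + 1)))}

lemma isOpen_setOf_eqOn {s : Set ℕ} (hs : s.Finite) (y : ℕ → α) :
    IsOpen {z : ℕ → α | EqOn z y s} :=
  isOpen_set_pi hs fun i _ => isOpen_discrete {y i}

lemma isMeagre_eventuallyDisagree {n : ℕ → ℕ} (hn : StrictMono n) (y : ℕ → α) :
    IsMeagre (eventuallyDisagree n y) := by
  have hdense : ∀ N, Dense (⋃ k ≥ N, {z : ℕ → α | EqOn z y (Ico (n k) (n (k + 1)))}) := by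
    intro N
    refine (isTopologicalBasis_cylinders _).dense_iff.2 ?_
    rintro _ ⟨x, m, rfl⟩ -
    classical
    set k := max N m
    refine ⟨(Ico (n k) (n (k + 1))).piecewise y x, fun i hi => ?_,
      mem_biUnion (le_max_left N m) (piecewise_eqOn _ _ _)⟩
    refine piecewise_eqOn_compl _ _ _ fun hik => ?_
    exact (hi.trans_le ((le_max_right N m).trans hn.le_apply)).not_ge hik.1
  have hres : ∀ N, (⋃ k ≥ N, {z : ℕ → α | EqOn z y (Ico (n k) (n (k + 1)))}) ∈ residual _ :=
    fun N => residual_of_dense_open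
      (isOpen_biUnion fun k _ => isOpen_setOf_eqOn (finite_Ico _ _) y) (hdense N)
  refine mem_of_superset (countable_iInter_mem.2 hres) fun z hz hzE => ?_
  obtain ⟨N, hN⟩ := eventually_atTop.1 hzE
  obtain ⟨k, hk, hzk⟩ := mem_iUnion₂.1 (mem_iInter.1 hz N)
  exact hN k hk hzk

lemma Dense.exists_cylinder_subset {U : Set (ℕ → α)} (hd : Dense U) (hU : IsOpen U)
    (v : ℕ → α) (m : ℕ) : ∃ w M, m ≤ M ∧ w ∈ cylinder v m ∧ cylinder w M ⊆ U := by
  obtain ⟨w, hwv, hwU⟩ :=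
    hd.inter_open_nonempty _ (isOpen_cylinder _ v m) ⟨v, self_mem_cylinder v m⟩
  obtain ⟨M, hM⟩ := exists_disjoint_cylinder hU.isClosed_compl (not_not_intro hwU)
  exact ⟨w, max m M, le_max_left _ _, hwv,
    (cylinder_anti w (le_max_right _ _)).trans (disjoint_compl_left_iff_subset.1 hM)⟩

lemma exists_block_subset_of_finset [Nonempty α] {U : Set (ℕ → α)} (hd : Dense U)
    (hU : IsOpen U) (N : ℕ) (t : Finset (ℕ → α)) :
    ∃ M, N < M ∧ ∃ u : ℕ → α, ∀ p ∈ t, ∀ z ∈ cylinder p N, EqOn z u (Ico N M) → z ∈ U := by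
  classical
  induction t using Finset.induction_on with
  | empty => exact ⟨N + 1, N.lt_succ_self, Classical.arbitrary _, by simp⟩
  | insert p t _ ih =>
    obtain ⟨M, hNM, u, hu⟩ := ih
    obtain ⟨w, M', hMM', hw, hwU⟩ := hd.exists_cylinder_subset hU ((Iio N).piecewise p u) M
    refine ⟨M', hNM.trans_le hMM', w, fun q hq z hz hzw => ?_⟩
    rcases Finset.mem_insert.1 hq with rfl | hq
    · refine hwU fun i hi => ?_
      rcases lt_or_ge i N with hiN | hiN
      · rw [hz i hiN, hw i (hiN.trans hNM), piecewise_eq_of_mem _ _ _ (mem_Iio.2 hiN)]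
      · exact hzw ⟨hiN, hi⟩
    · refine hu q hq z hz fun i hi => ?_
      rw [hzw ⟨hi.1, hi.2.trans_le hMM'⟩, hw i hi.2,
        piecewise_eq_of_notMem _ _ _ (notMem_Iio.2 hi.1)]

lemma exists_block_subset [Finite α] [Nonempty α] {U : Set (ℕ → α)} (hd : Dense U)
    (hU : IsOpen U) (N : ℕ) : ∃ M, N < M ∧ ∃ u : ℕ → α, ∀ z, EqOn z u (Ico N M) → z ∈ U := by
  obtain ⟨t, ht⟩ := CompactSpace.elim_nhds_subcover (fun p : ℕ → α => cylinder p N)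
    fun p => (isOpen_cylinder _ p N).mem_nhds (self_mem_cylinder p N)
  obtain ⟨M, hNM, u, hu⟩ := exists_block_subset_of_finset hd hU N t
  refine ⟨M, hNM, u, fun z hz => ?_⟩
  obtain ⟨p, hp, hzp⟩ := mem_iUnion₂.1 (ht.symm ▸ mem_univ z : z ∈ ⋃ p ∈ t, cylinder p N)
  exact hu p hp z hzp hz

lemma exists_subset_eventuallyDisagree [Finite α] [Nonempty α] {A : Set (ℕ → α)}
    (hA : IsMeagre A) : ∃ n : ℕ → ℕ, StrictMono n ∧ ∃ y, A ⊆ eventuallyDisagree n y := by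
  obtain ⟨t, htA, htGδ, htd⟩ := mem_residual.1 hA
  obtain ⟨U, hUo, rfl⟩ := isGδ_iff_eq_iInter_nat.1 htGδ
  have hV : ∀ k, Dense (⋂ j ∈ Iic k, U j) ∧ IsOpen (⋂ j ∈ Iic k, U j) := fun k =>
    ⟨htd.mono fun z hz => mem_iInter₂.2 fun j _ => mem_iInter.1 hz j,
      (finite_Iic k).isOpen_biInter fun j _ => hUo j⟩
  choose M hM u hu using fun k N => exists_block_subset (hV k).1 (hV k).2 N
  let n : ℕ → ℕ := fun k => Nat.rec 0 (fun k nk => M k nk) k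
  have hn : StrictMono n := strictMono_nat_of_lt_succ fun k => hM k (n k)
  refine ⟨n, hn, fun i => u (blockIndex n i) (n (blockIndex n i)) i, fun z hz => ?_⟩
  obtain ⟨j, hj⟩ : ∃ j, z ∉ U j := by
    by_contra! hzU
    exact htA (mem_iInter.2 hzU) hz
  filter_upwards [eventually_ge_atTop j] with k hjk hzk
  exact hj (mem_iInter₂.1 (hu k (n k) z
    (hzk.trans (eqOn_blockIndex hn (fun k => u k (n k)) k))) j hjk)

end BlockMeagre

lemma xor_mem_eventuallyDisagree {n r : ℕ → ℕ} (hn : StrictMono n) (hr : StrictMono r)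
    {a x y w : Cantor} (ha : a ∈ eventuallyDisagree n y)
    (hx : ∀ᶠ j in atTop, ∃ k, r j ≤ k ∧ k < r (j + 1) ∧ EqOn x w (Ico (n k) (n (k + 1)))) :
    (fun i => xor (a i) (x i)) ∈ eventuallyDisagree (n ∘ r) fun i => xor (y i) (w i) := by
  obtain ⟨K, hK⟩ := eventually_atTop.1 ha
  filter_upwards [hx, eventually_ge_atTop K] with j ⟨k, hjk, hkj, hxw⟩ hKj hagree
  refine hK k (hKj.trans (hr.le_apply.trans hjk)) fun i hi => ?_
  have hi' : xor (a i) (x i) = xor (y i) (w i) :=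
    hagree ⟨(hn.monotone hjk).trans hi.1, hi.2.trans_le (hn.monotone hkj)⟩
  rwa [hxw hi, Bool.xor_left_inj] at hi'

lemma isMeagre_cantorSum_of_sqBullet {A Y : Set Cantor} {n : ℕ → ℕ} (hn : StrictMono n)
    {y : Cantor} (hA : A ⊆ eventuallyDisagree n y) {b : ℕ → ℕ}
    (enc : ∀ k, (Ico (n k) (n (k + 1)) → Bool) → Fin (b k))
    (henc : ∀ᶠ k in atTop, Injective (enc k)) {r : ℕ → ℕ} (hr : StrictMono r)
    {h : ∀ k, Fin (b k)}
    (hY : ∀ x ∈ Y, SqBullet (fun k => enc k ((Ico (n k) (n (k + 1))).domRestrict x)) r h) :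
    IsMeagre (cantorSum A Y) := by
  let w : ℕ → Cantor := fun k =>
    invFun (fun x : Cantor => enc k ((Ico (n k) (n (k + 1))).domRestrict x)) (h k)
  let W : Cantor := fun i => w (blockIndex n i) i
  obtain ⟨K, hK⟩ := eventually_atTop.1 henc
  refine (isMeagre_eventuallyDisagree (hn.comp hr) fun i => xor (y i) (W i)).mono ?_
  rintro _ ⟨a, ha, x, hx, rfl⟩
  refine xor_mem_eventuallyDisagree hn hr (hA ha) ?_
  filter_upwards [hY x hx, eventually_ge_atTop K] with j ⟨k, hjk, hkj, hcode⟩ hKj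
  have hxw : EqOn x (w k) (Ico (n k) (n (k + 1))) := by
    have hw : enc k ((Ico (n k) (n (k + 1))).domRestrict (w k)) = h k := invFun_eq
      (f := fun x : Cantor => enc k ((Ico (n k) (n (k + 1))).domRestrict x)) ⟨x, hcode⟩
    exact fun i hi =>
      congrFun (hK k (hKj.trans (hr.le_apply.trans hjk)) (hcode.trans hw.symm)) ⟨i, hi⟩
  exact ⟨k, hjk, hkj, hxw.trans (eqOn_blockIndex hn w k).symm⟩

lemma bEq_le_mk {b : ℕ → ℕ} {F : Set (∀ n, Fin (b n))}
    (hF : ¬∃ r h, IsIntervalPartition r ∧ ∀ f ∈ F, SqBullet f r h) : bEq b ≤ #F :=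
  csInf_le' ⟨F, rfl, hF⟩

lemma exists_mem_bEq_le_mk_of_not_isMeagerAdditive {D : Set (ℕ → ℕ)}
    (hdom : ∀ f : ℕ → ℕ, ∃ g ∈ D, ∀ᶠ n in atTop, f n ≤ g n) (hpos : ∀ b ∈ D, ∀ n, 0 < b n)
    {Y : Set Cantor} (hY : ¬IsMeagerAdditive Y) : ∃ b ∈ D, bEq b ≤ #Y := by
  obtain ⟨A, hA, hAY⟩ : ∃ A, IsMeagre A ∧ ¬IsMeagre (cantorSum A Y) := by
    simpa [IsMeagerAdditive] using hY
  obtain ⟨n, hn, y, hAy⟩ := exists_subset_eventuallyDisagree hA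
  obtain ⟨b, hbD, hnb⟩ := hdom fun k => 2 ^ (n (k + 1) - n k)
  have hcode : ∀ k, ∃ enc : (Ico (n k) (n (k + 1)) → Bool) → Fin (b k),
      2 ^ (n (k + 1) - n k) ≤ b k → Injective enc := by
    intro k
    by_cases hk : 2 ^ (n (k + 1) - n k) ≤ b k
    · obtain ⟨e⟩ := Function.Embedding.nonempty_of_card_le
        (α := Ico (n k) (n (k + 1)) → Bool) (β := Fin (b k)) (by simpa using hk)
      exact ⟨e, fun _ => e.injective⟩
    · exact ⟨fun _ => ⟨0, hpos b hbD k⟩, fun h => absurd h hk⟩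
  choose enc henc using hcode
  refine ⟨b, hbD, le_trans (bEq_le_mk ?_) (mk_image_le (s := Y)
    (f := fun x k => enc k ((Ico (n k) (n (k + 1))).domRestrict x)))⟩
  rintro ⟨r, h, ⟨-, hr⟩, hrh⟩
  exact hAY (isMeagre_cantorSum_of_sqBullet hn hAy enc (hnb.mono henc) hr
    fun x hx => hrh _ (mem_image_of_mem _ hx))

lemma isMeagre_singleton_cantor (x : Cantor) : IsMeagre ({x} : Set Cantor) := by
  refine (isMeagre_eventuallyDisagree strictMono_id fun i => !x i).mono ?_
  rintro _ rfl
  exact .of_forall fun k hk => by simpa using hk ⟨le_rfl, k.lt_succ_self⟩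

lemma not_isMeagerAdditive_univ : ¬IsMeagerAdditive (univ : Set Cantor) := by
  intro h
  refine not_isMeagre_of_isOpen isOpen_univ univ_nonempty
    ((h {fun _ => false} (isMeagre_singleton_cantor _)).mono fun z _ => ?_)
  exact ⟨fun _ => false, rfl, z, trivial, by simp⟩

lemma exists_mk_eq_nonMA : ∃ Y : Set Cantor, #Y = nonMA ∧ ¬IsMeagerAdditive Y := by
  have hne : {c | ∃ Y : Set Cantor, #Y = c ∧ ¬IsMeagerAdditive Y}.Nonempty :=
    ⟨_, univ, rfl, not_isMeagerAdditive_univ⟩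
  exact csInf_mem hne

lemma isMeagerAdditive_singleton (x : Cantor) : IsMeagerAdditive {x} := by
  intro A hA
  let T : Cantor → Cantor := fun z i => xor (z i) (x i)
  have hT : Involutive T := fun z => by funext i; simp [T]
  have hTc : Continuous T :=
    continuous_pi fun i =>
      (continuous_of_discreteTopology (f := fun t : Bool => xor t (x i))).comp (continuous_apply i)
  rw [cantorSum, image2_singleton_right, image_eq_preimage_of_inverse hT.leftInverse hT]
  exact hA.preimage_of_isOpenMap hTc (Homeomorph.mk (hT.toPerm T) hTc hTc).isOpenMap

lemma covMA_le_continuum : covMA ≤ 𝔠 := by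
  refine csInf_le' ⟨range fun x : Cantor => {x}, ?_, ?_, ?_⟩
  · rintro _ ⟨x, rfl⟩
    exact isMeagerAdditive_singleton x
  · simp [mk_range_eq _ singleton_injective]
  · exact eq_univ_of_forall fun z => ⟨{z}, ⟨z, rfl⟩, rfl⟩

lemma infinite_of_dominating {D : Set (ℕ → ℕ)}
    (hdom : ∀ f : ℕ → ℕ, ∃ g ∈ D, ∀ᶠ n in atTop, f n ≤ g n) : D.Infinite := by
  intro hfin
  obtain ⟨g, hg⟩ := hfin.bddAbove
  obtain ⟨g', hg'D, hg'⟩ := hdom (g + 1)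
  obtain ⟨n, hn⟩ := hg'.exists
  exact (hg hg'D n).not_gt hn

lemma not_sqBullet_of_forall_ne {b : ℕ → ℕ} {f h : ∀ n, Fin (b n)} (hfh : ∀ n, f n ≠ h n)
    (r : ℕ → ℕ) : ¬SqBullet f r h := fun hf => by
  obtain ⟨_, k, -, -, hk⟩ := hf.exists
  exact hfh k hk

lemma two_le_dEq {b : ℕ → ℕ} (hb : ∀ n, 2 ≤ b n) : 2 ≤ dEq b := by
  have (n : ℕ) : Nontrivial (Fin (b n)) := Fin.nontrivial_iff_two_le.2 (hb n)
  refine le_csInf ⟨_, {p | IsIntervalPartition p.1}, fun p hp => hp, rfl, fun f =>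
    ⟨(id, f), ⟨rfl, strictMono_id⟩, .of_forall fun n => ⟨n, le_rfl, n.lt_succ_self, rfl⟩⟩⟩ ?_
  rintro _ ⟨D', -, rfl, hD'⟩
  obtain ⟨p, hp, -⟩ := hD' fun _ => Classical.arbitrary _
  choose f hf using fun n => exists_ne (p.2 n)
  obtain ⟨q, hq, hfq⟩ := hD' f
  refine two_le_iff.2 ⟨⟨p, hp⟩, ⟨q, hq⟩, fun hpq => ?_⟩
  obtain rfl : p = q := congrArg Subtype.val hpq
  exact not_sqBullet_of_forall_ne hf _ hfq

lemma continuum_le_prod_of_two_le {ι : Type u} [Infinite ι] {c : ι → Cardinal.{u}}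
    (hc : ∀ i, 2 ≤ c i) : 𝔠 ≤ prod c := calc
  𝔠 = 2 ^ ℵ₀ := two_power_aleph0.symm
  _ ≤ 2 ^ #ι := power_le_power_left two_ne_zero (aleph0_le_mk ι)
  _ = prod fun _ : ι => 2 := by simp [prod_const]
  _ ≤ prod c := prod_le_prod _ _ hc

/-- If `D ⊆ ω^ω` is a `≤*`-dominating family all of whose members are everywhere `≥ 2`,
then `min{𝔟_b^eq : b ∈ D} ≤ non(MA)` and `cov(MA) ≤ ∏_{b ∈ D} 𝔡_b^eq`. -/
theorem min_bEq_le_nonMA_covMA_le_prod_dEq (D : Set (ℕ → ℕ))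
    (hdom : ∀ f : ℕ → ℕ, ∃ g ∈ D, ∀ᶠ n in atTop, f n ≤ g n)
    (h2 : ∀ b ∈ D, ∀ n, 2 ≤ b n) :
    sInf {c : Cardinal | ∃ b ∈ D, bEq b = c} ≤ nonMA ∧
    covMA ≤ Cardinal.prod (fun b : D => dEq b.1) := by
  refine ⟨?_, ?_⟩
  · obtain ⟨Y, hYc, hY⟩ := exists_mk_eq_nonMA
    obtain ⟨b, hbD, hb⟩ := exists_mem_bEq_le_mk_of_not_isMeagerAdditive hdom
      (fun b hb n => two_pos.trans_le (h2 b hb n)) hY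
    exact le_trans (csInf_le' ⟨b, hbD, rfl⟩) (hb.trans hYc.le)
  · have : Infinite D := (infinite_of_dominating hdom).to_subtype
    exact covMA_le_continuum.trans
      (continuum_le_prod_of_two_le fun b => two_le_dEq (h2 b.1 b.2))
end
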